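/- Let G be a graph containing a subgraph K isomorphic to K_{2,3} with V(K) = {x₁, x₂, x₃, x₄, x₅} and E(K) = {x_i x_j : i ∈ {1,2}, j ∈ {3,4,5}}. Suppose there is an x₁x₂-path P in G − {x₃, x₄, x₅} and an internal vertex v of P such that the subgraph of G induced by (V(G) \ V(P)) ∪ {v} contains a circuit C with v ∈ V(C) and |V(C) ∩ {x₃, x₄, x₅}| = 2. Then G contains a TK_5. -/

import Mathlib

open SimpleGraph

/-! ### Basic notions: subdivisions, planarity (via Kuratowski), connectivity -/

/-- A realization of a subdivision of `H` inside `G` whose branch vertices are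
given by the injective map `b`: for every edge of `H` there is a path of `G`
between the corresponding branch vertices, these paths are internally disjoint
and internally avoid the branch vertices. -/
def SubdivWith {α V : Type*} (H : SimpleGraph α) (G : SimpleGraph V) (b : α → V) : Prop :=
  Function.Injective b ∧
  ∃ P : ∀ i j : α, H.Adj i j → G.Walk (b i) (b j),
    (∀ i j (h : H.Adj i j), (P i j h).IsPath) ∧
    (∀ i j (h : H.Adj i j), ∀ v ∈ (P i j h).support, v ∈ Set.range b → v = b i ∨ v = b j) ∧
    (∀ i j k l (h : H.Adj i j) (h' : H.Adj k l), s(i, j) ≠ s(k, l) →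
      ∀ v, v ∈ (P i j h).support → v ∈ (P k l h').support → v ∈ Set.range b)

/-- `G` contains a subdivision of `H` (as a subgraph). -/
def ContainsSubdiv {α V : Type*} (H : SimpleGraph α) (G : SimpleGraph V) : Prop :=
  ∃ b : α → V, SubdivWith H G b

/-- `G` contains a `TK₅`, i.e. a subdivision of `K₅`. -/
def ContainsTK5 {V : Type*} (G : SimpleGraph V) : Prop :=
  ContainsSubdiv (⊤ : SimpleGraph (Fin 5)) G

/-- `G` contains a `TK₃,₃`, i.e. a subdivision of `K₃,₃`. -/
def ContainsTK33 {V : Type*} (G : SimpleGraph V) : Prop :=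
  ContainsSubdiv (completeBipartiteGraph (Fin 3) (Fin 3)) G

/-- Planarity of a graph, rendered combinatorially through Kuratowski's
characterization: a graph is planar iff it contains no subdivision of `K₅`
and no subdivision of `K₃,₃`. -/
def IsPlanar {V : Type*} (G : SimpleGraph V) : Prop :=
  ¬ ContainsTK5 G ∧ ¬ ContainsTK33 G

/-- `κ(G[A]) ≥ k` : the subgraph of `G` induced on `A` is `k`-connected:
`A` has more than `k` vertices and removing fewer than `k` vertices of `A`
leaves the induced subgraph connected. -/
def KConnOn {V : Type*} (G : SimpleGraph V) (A : Set V) (k : ℕ) : Prop :=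
  k < A.ncard ∧ ∀ s : Set V, s ⊆ A → s.ncard < k → (G.induce (A \ s)).Connected

/-- `κ(G) ≥ k` : `G` is `k`-connected. -/
def KConn {V : Type*} (G : SimpleGraph V) (k : ℕ) : Prop :=
  KConnOn G Set.univ k

/-- The vertex connectivity `κ(G)`. -/
noncomputable def kappa {V : Type*} (G : SimpleGraph V) : ℕ :=
  sSup {k : ℕ | KConn G k}

/-- A stable (independent) set of vertices. -/
def StableSet {V : Type*} (G : SimpleGraph V) (s : Set V) : Prop :=
  ∀ u ∈ s, ∀ v ∈ s, ¬ G.Adj u v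

/-- `a` is an apex vertex of `G` : `G - a` is planar. -/
def IsApexVertex {V : Type*} (G : SimpleGraph V) (a : V) : Prop :=
  IsPlanar (G.induce {a}ᶜ)

/-- `G` is an apex graph. -/
def IsApexGraph {V : Type*} (G : SimpleGraph V) : Prop :=
  ∃ a, IsApexVertex G a

/-- `P` is an induced path of `G` (as a walk that is a path whose vertex set
spans no further edges of `G`). -/
def IsInducedPathW {V : Type*} (G : SimpleGraph V) {x y : V} (P : G.Walk x y) : Prop :=
  P.IsPath ∧ ∀ u v, u ∈ P.support → v ∈ P.support → G.Adj u v → s(u, v) ∈ P.edges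

/-- `B` is (the vertex set of) a nontrivial bridge of `S` in `G`, i.e. a
connected component of `G - S`. -/
def IsBridgeComp {V : Type*} (G : SimpleGraph V) (S : Set V) (B : Set V) : Prop :=
  B.Nonempty ∧ (∀ v ∈ B, v ∉ S) ∧ (G.induce B).Connected ∧
  ∀ u ∈ B, ∀ v, G.Adj u v → v ∉ S → v ∈ B

/-! ### Blocks, cutvertices, chains of blocks (relative to a vertex set `A`) -/

/-- `B ⊆ V` induces a connected subgraph. -/
def ConnOn {V : Type*} (G : SimpleGraph V) (B : Set V) : Prop :=
  B.Nonempty ∧ (G.induce B).Connected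

/-- `B` induces a `2`-connected subgraph in the block sense: connected, and
no single vertex of `B` disconnects it (a single edge counts). -/
def BiconnOn {V : Type*} (G : SimpleGraph V) (B : Set V) : Prop :=
  ConnOn G B ∧ ∀ v ∈ B, (B \ {v}).Nonempty → (G.induce (B \ {v})).Connected

/-- `B` is (the vertex set of) a block of the subgraph of `G` induced on `A`:
a maximal subset of `A` inducing a `2`-connected subgraph (or an edge). -/
def IsBlockOf {V : Type*} (G : SimpleGraph V) (A B : Set V) : Prop :=
  B ⊆ A ∧ BiconnOn G B ∧ ∀ B', B' ⊆ A → BiconnOn G B' → B ⊆ B' → B = B'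

/-- `v` is a cutvertex of the (connected) subgraph of `G` induced on `A`. -/
def IsCutvertexOf {V : Type*} (G : SimpleGraph V) (A : Set V) (v : V) : Prop :=
  v ∈ A ∧ (G.induce A).Connected ∧ ¬ (G.induce (A \ {v})).Connected

/-- `B` is a leaf block of the subgraph of `G` induced on `A` : a block
containing at most one cutvertex. -/
def IsLeafBlockOf {V : Type*} (G : SimpleGraph V) (A B : Set V) : Prop :=
  IsBlockOf G A B ∧ {v ∈ B | IsCutvertexOf G A v}.Subsingleton

/-- The block `B` of the subgraph of `G` induced on `A` meets `S` internally:
`S` contains a vertex of `B` that is not a cutvertex. -/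
def MeetsInternally {V : Type*} (G : SimpleGraph V) (A B S : Set V) : Prop :=
  ∃ v ∈ B ∩ S, ¬ IsCutvertexOf G A v

/-- The subgraph of `G` induced on `A` is a chain of blocks: its block tree is
a path, i.e. it is connected, every cutvertex lies in exactly two blocks and
every block contains at most two cutvertices. -/
def IsChainOfBlocks {V : Type*} (G : SimpleGraph V) (A : Set V) : Prop :=
  (G.induce A).Connected ∧
  (∀ v, IsCutvertexOf G A v → {B : Set V | IsBlockOf G A B ∧ v ∈ B}.ncard = 2) ∧
  (∀ B, IsBlockOf G A B → {v ∈ B | IsCutvertexOf G A v}.ncard ≤ 2)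

/-! ### Hammocks -/

/-- The boundary of a subgraph `H` of `G` : vertices of `H` incident with an
edge of `G` not in `H`. -/
def hammockBoundary {V : Type*} (G : SimpleGraph V) (H : G.Subgraph) : Set V :=
  {v | v ∈ H.verts ∧ ∃ w, G.Adj v w ∧ s(v, w) ∉ H.edgeSet}

/-- `H` is a `k`-hammock of `G` : a connected subgraph whose boundary has
exactly `k` vertices. -/
def IsHammock {V : Type*} (G : SimpleGraph V) (H : G.Subgraph) (k : ℕ) : Prop :=
  H.Connected ∧ (hammockBoundary G H).ncard = k

/-- The cone over `G` with base `B` : a new vertex joined to every member of `B`. -/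
def coneOver {W : Type*} (G : SimpleGraph W) (B : Set W) : SimpleGraph (Option W) where
  Adj a b :=
    Option.elim a (Option.elim b False (fun v => v ∈ B))
      (fun u => Option.elim b (u ∈ B) (fun v => G.Adj u v))
  symm := ⟨by
    rintro (_ | u) (_ | v) h
    · simp only [Option.elim] at h
    · exact h
    · exact h
    · exact G.adj_symm h⟩
  loopless := ⟨by
    rintro (_ | u) h
    · simp only [Option.elim] at h
    · exact G.loopless.irrefl u h⟩

/-- `G` has an embedding in the closed disc with the vertices of `B` on the
boundary of the disc; combinatorially: the cone over `G` with base `B` is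
planar. -/
def DiscEmbeddable {W : Type*} (G : SimpleGraph W) (B : Set W) : Prop :=
  IsPlanar (coneOver G B)

/-- `H` is a planar hammock of `G` : a `5`-hammock with `|V(G)| > |V(H)| ≥ 7`
embeddable in the closed disc with its boundary vertices on the disc boundary. -/
def IsPlanarHammock {V : Type*} [Fintype V] (G : SimpleGraph V) (H : G.Subgraph) : Prop :=
  IsHammock G H 5 ∧ 7 ≤ H.verts.ncard ∧ H.verts.ncard < Fintype.card V ∧
  DiscEmbeddable H.coe {v : H.verts | (v : V) ∈ hammockBoundary G H}

/-! ### Rooted subdivisions, small subgraphs, circuits -/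

/-- `G` contains a `TK₄` rooted at `W` : a subdivision of `K₄` whose branch
vertices are exactly the members of `W`. -/
def ContainsTK4RootedAt {V : Type*} (G : SimpleGraph V) (W : Set V) : Prop :=
  ∃ b : Fin 4 → V, Set.range b = W ∧ SubdivWith (⊤ : SimpleGraph (Fin 4)) G b

/-- `G` contains `K₂,₃` as a subgraph. -/
def ContainsK23 {V : Type*} (G : SimpleGraph V) : Prop :=
  ∃ x₁ x₂ x₃ x₄ x₅ : V, [x₁, x₂, x₃, x₄, x₅].Pairwise (· ≠ ·) ∧
    G.Adj x₁ x₃ ∧ G.Adj x₁ x₄ ∧ G.Adj x₁ x₅ ∧ G.Adj x₂ x₃ ∧ G.Adj x₂ x₄ ∧ G.Adj x₂ x₅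

/-- `G` contains `K₄⁻` (`K₄` minus an edge) as a subgraph. -/
def ContainsK4minus {V : Type*} (G : SimpleGraph V) : Prop :=
  ∃ a b c d : V, [a, b, c, d].Pairwise (· ≠ ·) ∧
    G.Adj a b ∧ G.Adj a c ∧ G.Adj a d ∧ G.Adj b c ∧ G.Adj b d

/-- `C` is a facial circuit of the (4-connected plane) graph `G`; by Tutte's
theorem these are exactly the induced nonseparating circuits. -/
def IsFacialCircuit {V : Type*} (G : SimpleGraph V) {a : V} (C : G.Walk a a) : Prop :=
  C.IsCycle ∧ (∀ u v, u ∈ C.support → v ∈ C.support → G.Adj u v → s(u, v) ∈ C.edges) ∧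
  (G.induce {v | v ∈ C.support}ᶜ).Connected

/-! ### Frames -/

/-- The subgraph `G(X,F)` of a frame `(X,F)` : vertex set `X ∪ V(F)`, edge set `F`. -/
def frameSubgraph {V : Type*} (G : SimpleGraph V) (X : Set V) (F : Set (Sym2 V)) :
    G.Subgraph where
  verts := X ∪ {v | ∃ e ∈ F, v ∈ e}
  Adj u v := s(u, v) ∈ F ∧ G.Adj u v
  adj_sub h := h.2
  edge_vert := fun {v w} h => Or.inr ⟨s(v, w), h.1, Sym2.mem_mk_left v w⟩
  symm := ⟨fun u v h => ⟨by rw [Sym2.eq_swap]; exact h.1, h.2.symm⟩⟩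

/-- `H` is a `U`-hammock : a `2`-hammock of `G` containing at most one element
of `U = UV ∪ UE`. -/
def IsUHammock {V : Type*} (G : SimpleGraph V) (UV : Set V) (UE : Set (Sym2 V))
    (H : G.Subgraph) : Prop :=
  IsHammock G H 2 ∧ (UV ∩ H.verts).ncard + (UE ∩ H.edgeSet).ncard ≤ 1

/-- Conditions (A.1)–(A.3) of the definition of a `U`-frame, for a collection
`B` of `U`-hammocks. -/
def FrameConds {V : Type*} (G : SimpleGraph V) (UV : Set V) (UE : Set (Sym2 V))
    (X : Set V) (F : Set (Sym2 V)) (B : Set G.Subgraph) : Prop :=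
  (∀ H ∈ B, IsUHammock G UV UE H) ∧
  -- `G` is the union of `G(X,F)` and the members of `B`
  (frameSubgraph G X F ⊔ sSup B = ⊤) ∧
  -- (A.1) each member of `B` has its two ends in distinct components of `G(X,F)`
  (∀ H ∈ B, ∃ (a b : V) (ha : a ∈ (frameSubgraph G X F).verts)
      (hb : b ∈ (frameSubgraph G X F).verts),
      a ≠ b ∧ hammockBoundary G H = {a, b} ∧
      ¬ (frameSubgraph G X F).coe.Reachable ⟨a, ha⟩ ⟨b, hb⟩) ∧
  -- (A.2) exactly three members of `B` meet `U`, and each vertex of `U` is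
  -- interior to some member of `B`
  ({H ∈ B | (UV ∩ H.verts).Nonempty ∨ (UE ∩ H.edgeSet).Nonempty}.ncard = 3) ∧
  (∀ u ∈ UV, ∃ H ∈ B, u ∈ H.verts \ hammockBoundary G H) ∧
  -- (A.3)
  X.ncard ≤ 2 ∧ (X = ∅ → B.ncard = 3)

/-- `(X, F)` is a `U`-frame of `G`. -/
def IsUFrame {V : Type*} (G : SimpleGraph V) (UV : Set V) (UE : Set (Sym2 V))
    (X : Set V) (F : Set (Sym2 V)) : Prop :=
  F ⊆ G.edgeSet ∧ (∀ e ∈ F, ∀ x ∈ X, x ∉ e) ∧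
  Nat.card (frameSubgraph G X F).coe.ConnectedComponent = 2 ∧
  ∃ B : Set G.Subgraph, FrameConds G UV UE X F B ∧
    -- (A.4) maximality of the collection `B`
    ∀ B' : Set G.Subgraph, FrameConds G UV UE X F B' →
      (∀ H ∈ B, ∃ H' ∈ B', H ≤ H') → B = B'

/-! ### Multigraphs -/

/-- The simple graph underlying the multigraph with edge-end map `ends`,
restricted to the edges outside `F`. -/
def Multi.simpleAvoiding {V E : Type*} (ends : E → Sym2 V) (F : Set E) :
    SimpleGraph V where
  Adj u v := u ≠ v ∧ ∃ e, e ∉ F ∧ ends e = s(u, v)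
  symm := ⟨by
    rintro u v ⟨h, e, he, hee⟩
    exact ⟨h.symm, e, he, hee.trans Sym2.eq_swap⟩⟩
  loopless := ⟨fun v h => h.1 rfl⟩

/-- The simple graph underlying the multigraph with edge-end map `ends`. -/
def Multi.simple {V E : Type*} (ends : E → Sym2 V) : SimpleGraph V :=
  Multi.simpleAvoiding ends ∅

/-- The multigraph with edge-end map `ends` has a circuit containing all
vertices of `AV` and all edges of `AE` : a cyclic sequence of `n ≥ 2` distinct
vertices and `n` distinct edges, consecutive vertices joined by the
corresponding edge. -/
def Multi.HasACircuit {V E : Type*} (ends : E → Sym2 V) (AV : Set V) (AE : Set E) : Prop :=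
  ∃ n : ℕ, 2 ≤ n ∧ ∃ (vtx : ZMod n → V) (edg : ZMod n → E),
    Function.Injective vtx ∧ Function.Injective edg ∧
    (∀ i, ends (edg i) = s(vtx i, vtx (i + 1))) ∧
    (∀ v ∈ AV, ∃ i, vtx i = v) ∧ (∀ e ∈ AE, ∃ i, edg i = e)

/-- `AE` is (the edge set of) a claw `K₁,₃` in the multigraph: three edges
sharing exactly one common endpoint and otherwise pairwise disjoint. -/
def Multi.IsClaw {V E : Type*} (ends : E → Sym2 V) (AE : Set E) : Prop :=
  ∃ (c x y z : V) (e₁ e₂ e₃ : E), [x, y, z].Pairwise (· ≠ ·) ∧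
    c ∉ ({x, y, z} : Set V) ∧ AE = {e₁, e₂, e₃} ∧
    ends e₁ = s(c, x) ∧ ends e₂ = s(c, y) ∧ ends e₃ = s(c, z)


/-!
The branch vertices of the `TK₅` are `x₁`, `x₂`, `v` and the two vertices `p`, `q` of
`{x₃, x₄, x₅}` on `C`; let `r` be the third one. Read from `v` in a suitable direction, `C` splits
into arcs `v → p → q → v`, and `P` splits at `v` into `x₁ → v → x₂`. With the four edges `xᵢp`,
`xᵢq` and the path `x₁ r x₂` this gives ten paths joining all pairs of branch vertices, and they
are internally disjoint because `C` meets `P` only in `v` and `r` lies on neither.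
-/

namespace SimpleGraph.Walk

variable {V : Type*} {G : SimpleGraph V} {u v w x : V}

lemma IsPath.eq_of_mem_support_append {p : G.Walk u v} {q : G.Walk v w}
    (hpq : (p.append q).IsPath) (hp : x ∈ p.support) (hq : x ∈ q.support) : x = v := by
  by_contra hxv
  exact hpq.ne_of_mem_support_of_append hxv hp hq rfl

lemma IsCycle.eq_or_eq_of_mem_support_append {p : G.Walk u v} {q : G.Walk v u}
    (hc : (p.append q).IsCycle) (hp : x ∈ p.support) (hq : x ∈ q.support) :
    x = u ∨ x = v := by
  have hnodup := hc.support_nodup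
  rw [tail_support_append, List.nodup_append] at hnodup
  rw [mem_support_iff] at hp hq
  rcases hp with rfl | hp
  · exact Or.inl rfl
  rcases hq with rfl | hq
  · exact Or.inr rfl
  exact absurd rfl (hnodup.2.2 x hp x hq)

lemma IsCycle.isPath_of_append_append {w₁ w₂ : V} {R₁ : G.Walk v w₁} {R₂ : G.Walk w₁ w₂}
    {R₃ : G.Walk w₂ v} (hR : (R₁.append (R₂.append R₃)).IsCycle) (hw₁ : w₁ ≠ v)
    (hw₂ : w₂ ≠ v) : (R₁.append R₂).IsPath ∧ (R₂.append R₃).IsPath := by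
  refine ⟨?_, hR.isPath_of_append_right (not_nil_of_ne hw₁.symm)⟩
  rw [append_assoc] at hR
  exact hR.isPath_of_append_left (not_nil_of_ne hw₂)

lemma IsCycle.eq_of_mem_support_of_append_append {w₁ w₂ : V} {R₁ : G.Walk v w₁}
    {R₂ : G.Walk w₁ w₂} {R₃ : G.Walk w₂ v} (hR : (R₁.append (R₂.append R₃)).IsCycle)
    (hw : w₁ ≠ w₂) (h₁ : x ∈ R₁.support) (h₃ : x ∈ R₃.support) : x = v := by
  have hvw₁ := hR.eq_or_eq_of_mem_support_append h₁ (by simp [h₃])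
  rw [append_assoc] at hR
  have hvw₂ := hR.eq_or_eq_of_mem_support_append (by simp [h₁]) h₃
  grind

/-- Read in the right direction, a cycle through `v`, `w₁` and `w₂` visits `w₁` before `w₂`. -/
lemma IsCycle.exists_append_append [DecidableEq V] {c : G.Walk v v} (hc : c.IsCycle)
    {w₁ w₂ : V} (h₁ : w₁ ∈ c.support) (h₂ : w₂ ∈ c.support) :
    ∃ (R₁ : G.Walk v w₁) (R₂ : G.Walk w₁ w₂) (R₃ : G.Walk w₂ v),
      (R₁.append (R₂.append R₃)).IsCycle ∧
        ∀ x ∈ (R₁.append (R₂.append R₃)).support, x ∈ c.support := by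
  have hc' := c.take_spec h₁
  by_cases h₂B : w₂ ∈ (c.dropUntil w₁ h₁).support
  · refine ⟨c.takeUntil w₁ h₁, (c.dropUntil w₁ h₁).takeUntil w₂ h₂B,
      (c.dropUntil w₁ h₁).dropUntil w₂ h₂B, ?_, fun x hx => ?_⟩
    · rwa [take_spec, hc']
    · rwa [take_spec, hc'] at hx
  · have h₂A : w₂ ∈ (c.takeUntil w₁ h₁).support := by
      rw [← hc', mem_support_append_iff] at h₂
      exact h₂.resolve_right h₂B
    refine ⟨(c.dropUntil w₁ h₁).reverse, ((c.takeUntil w₁ h₁).dropUntil w₂ h₂A).reverse,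
      ((c.takeUntil w₁ h₁).takeUntil w₂ h₂A).reverse, ?_, fun x hx => ?_⟩
    · rw [← reverse_append, ← reverse_append, take_spec, hc']
      exact hc.reverse
    · rwa [← reverse_append, ← reverse_append, take_spec, hc', support_reverse,
        List.mem_reverse] at hx

end SimpleGraph.Walk

theorem Set.exists_ne_mem_inter_and_mem_diff_of_ncard_inter_eq_two {α : Type*} {S T : Set α}
    (hT : T.Finite) (hTcard : 2 < T.ncard) (h : (T ∩ S).ncard = 2) :
    ∃ p q r, p ≠ q ∧ p ∈ T ∩ S ∧ q ∈ T ∩ S ∧ r ∈ T \ S := by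
  obtain ⟨p, q, hpq, hTS⟩ := Set.ncard_eq_two.mp h
  obtain ⟨r, hrT, hrTS⟩ :=
    Set.exists_mem_notMem_of_ncard_lt_ncard (h ▸ hTcard) (hT.inter_of_left S)
  exact ⟨p, q, r, hpq, by simp [hTS], by simp [hTS], hrT, fun hrS => hrTS ⟨hrT, hrS⟩⟩

/-- `tag u` names the edge of `H` whose path passes through the non-branch vertex `u`; this is
what makes the paths internally disjoint. -/
theorem subdivWith_of_walks {α V : Type*} [LinearOrder α] {H : SimpleGraph α}
    {G : SimpleGraph V} {y : α → V} (hy : Function.Injective y)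
    (W : ∀ i j, i < j → G.Walk (y i) (y j))
    (hpath : ∀ i j h, H.Adj i j → (W i j h).IsPath)
    (hbranch : ∀ i j h k, H.Adj i j → y k ∈ (W i j h).support → k = i ∨ k = j)
    (tag : V → Sym2 α)
    (htag : ∀ i j h, H.Adj i j → ∀ u ∈ (W i j h).support, u ∉ Set.range y →
      tag u = s(i, j)) :
    SubdivWith H G y := by
  let W' : ∀ i j, i ≠ j → G.Walk (y i) (y j) := fun i j hij =>
    if h : i < j then W i j h else (W j i ((not_lt.mp h).lt_of_ne hij.symm)).reverse
  have hW' : ∀ i j (hij : H.Adj i j), (W' i j hij.ne).IsPath ∧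
      (∀ k, y k ∈ (W' i j hij.ne).support → k = i ∨ k = j) ∧
      ∀ u ∈ (W' i j hij.ne).support, u ∉ Set.range y → tag u = s(i, j) := by
    intro i j hij
    by_cases h : i < j
    · simp only [W', dif_pos h]
      exact ⟨hpath i j h hij, fun k => hbranch i j h k hij, htag i j h hij⟩
    · simp only [W', dif_neg h, Walk.isPath_reverse_iff, Walk.support_reverse,
        List.mem_reverse, Sym2.eq_swap (a := i)]
      have hji := (not_lt.mp h).lt_of_ne hij.ne.symm
      exact ⟨hpath j i hji hij.symm, fun k hk => (hbranch j i hji k hij.symm hk).symm,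
        htag j i hji hij.symm⟩
  refine ⟨hy, fun i j hij => W' i j hij.ne, fun i j hij => (hW' i j hij).1, ?_, ?_⟩
  · rintro i j hij _ hu ⟨k, rfl⟩
    rcases (hW' i j hij).2.1 k hu with rfl | rfl
    exacts [Or.inl rfl, Or.inr rfl]
  · intro i j k l hij hkl hne u hu hu'
    by_contra hnot
    exact hne (((hW' i j hij).2.2 u hu hnot).symm.trans ((hW' k l hkl).2.2 u hu' hnot))

open Walk in
theorem containsTK5_of_poles_path_cycle {V : Type*} {G : SimpleGraph V} {a b v p q r : V}
    (hap : G.Adj a p) (haq : G.Adj a q) (har : G.Adj a r)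
    (hbp : G.Adj b p) (hbq : G.Adj b q) (hbr : G.Adj b r)
    (hva : v ≠ a) (hvb : v ≠ b) (hpq : p ≠ q)
    {P₁ : G.Walk a v} {P₂ : G.Walk v b} (hP : (P₁.append P₂).IsPath)
    {R₁ : G.Walk v p} {R₂ : G.Walk p q} {R₃ : G.Walk q v}
    (hR : (R₁.append (R₂.append R₃)).IsCycle)
    (hPR : ∀ x ∈ (P₁.append P₂).support, x ∈ (R₁.append (R₂.append R₃)).support → x = v)
    (hpP : p ∉ (P₁.append P₂).support) (hqP : q ∉ (P₁.append P₂).support)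
    (hrP : r ∉ (P₁.append P₂).support) (hrR : r ∉ (R₁.append (R₂.append R₃)).support) :
    ContainsTK5 G := by
  classical
  simp only [mem_support_append_iff, not_or] at hPR hpP hqP hrP hrR
  have hP₁₂ : ∀ x ∈ P₁.support, x ∈ P₂.support → x = v := fun _ => hP.eq_of_mem_support_append
  have hpv : p ≠ v := by rintro rfl; exact hpP.2 P₂.start_mem_support
  have hqv : q ≠ v := by rintro rfl; exact hqP.2 P₂.start_mem_support
  obtain ⟨hR₁₂, hR₂₃⟩ := hR.isPath_of_append_append hpv hqv
  have hR₁₃ : ∀ x ∈ R₁.support, x ∈ R₃.support → x = v :=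
    fun _ => hR.eq_of_mem_support_of_append_append hpq
  have hab : a ≠ b := fun h => hva (hP₁₂ a P₁.start_mem_support (h ▸ P₂.end_mem_support)).symm
  have hbP₁ : b ∉ P₁.support := fun h => hvb (hP₁₂ b h P₂.end_mem_support).symm
  have haP₂ : a ∉ P₂.support := fun h => hva (hP₁₂ a P₁.start_mem_support h).symm
  have haR : a ∉ R₁.support ∧ a ∉ R₂.support ∧ a ∉ R₃.support := by
    simp only [← not_or]
    exact fun h => hva (hPR a (Or.inl P₁.start_mem_support) h).symm
  have hbR : b ∉ R₁.support ∧ b ∉ R₂.support ∧ b ∉ R₃.support := by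
    simp only [← not_or]
    exact fun h => hvb (hPR b (Or.inr P₂.end_mem_support) h).symm
  have hqR₁ : q ∉ R₁.support := fun h => hqv (hR₁₃ q h R₃.start_mem_support)
  have hvR₂ : v ∉ R₂.support :=
    fun h => hpv (hR₁₂.eq_of_mem_support_append R₁.start_mem_support h).symm
  have hpR₃ : p ∉ R₃.support :=
    fun h => hpq (hR₂₃.eq_of_mem_support_append R₂.start_mem_support h)
  have hpa : p ≠ a := by rintro rfl; exact hpP.1 P₁.start_mem_support
  have hpb : p ≠ b := by rintro rfl; exact hpP.2 P₂.end_mem_support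
  have hqa : q ≠ a := by rintro rfl; exact hqP.1 P₁.start_mem_support
  have hqb : q ≠ b := by rintro rfl; exact hqP.2 P₂.end_mem_support
  have hra : r ≠ a := by rintro rfl; exact hrP.1 P₁.start_mem_support
  have hrb : r ≠ b := by rintro rfl; exact hrP.2 P₂.end_mem_support
  have hrv : r ≠ v := by rintro rfl; exact hrP.2 P₂.start_mem_support
  have hrp : r ≠ p := by rintro rfl; exact hrR.1 R₁.end_mem_support
  have hrq : r ≠ q := by rintro rfl; exact hrR.2.2 R₃.start_mem_support
  let y : Fin 5 → V := ![a, b, v, p, q]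
  have hy : Function.Injective y := by
    refine List.nodup_ofFn.mp ?_
    simp [y, List.ofFn_succ, hab, hva.symm, hvb.symm, hpa.symm, hpb.symm, hqa.symm, hqb.symm,
      hpv.symm, hqv.symm, hpq]
  let Q : G.Walk a b := cons har (cons hbr.symm nil)
  let W : ∀ i j, i < j → G.Walk (y i) (y j) := fun i j h =>
    match i, j, h with
    | 0, 1, _ => Q
    | 0, 2, _ => P₁
    | 0, 3, _ => hap.toWalk
    | 0, 4, _ => haq.toWalk
    | 1, 2, _ => P₂.reverse
    | 1, 3, _ => hbp.toWalk
    | 1, 4, _ => hbq.toWalk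
    | 2, 3, _ => R₁
    | 2, 4, _ => R₃.reverse
    | 3, 4, _ => R₂
    | 0, 0, h | 1, 0, h | 1, 1, h | 2, 0, h | 2, 1, h | 2, 2, h | 3, 0, h | 3, 1, h | 3, 2, h
    | 3, 3, h | 4, 0, h | 4, 1, h | 4, 2, h | 4, 3, h | 4, 4, h => absurd h (by decide)
  let tag : V → Sym2 (Fin 5) := fun u =>
    if u ∈ P₁.support then s(0, 2) else if u ∈ P₂.support then s(1, 2)
    else if u ∈ R₁.support then s(2, 3) else if u ∈ R₂.support then s(3, 4)
    else if u ∈ R₃.support then s(2, 4) else s(0, 1)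
  refine ⟨y, subdivWith_of_walks hy W ?_ ?_ tag ?_⟩
  · have hQ : Q.IsPath := by simp [Q, hab, hra.symm, hrb]
    intro i j hij _
    fin_cases i <;> fin_cases j <;>
      first
      | exact absurd hij (by decide)
      | exact hQ | exact hP.of_append_left | exact hP.of_append_right.reverse
      | exact hR₁₂.of_append_left | exact hR₂₃.of_append_left | exact hR₂₃.of_append_right.reverse
      | exact IsPath.of_adj _
  · intro i j hij k _
    fin_cases i <;> fin_cases j <;> (try exact absurd hij (by decide)) <;> fin_cases k <;>
      simp [y, W, Q, hab, hva, hvb, hpa, hpb, hqa, hqb, hpq,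
        hab.symm, hpa.symm, hpb.symm, hqa.symm, hqb.symm, hpv.symm, hqv.symm,
        hpq.symm, hra.symm, hrb.symm, hrv.symm, hrp.symm, hrq.symm, hpP, hqP, haR, hbR, hbP₁, haP₂,
        hqR₁, hvR₂, hpR₃]
  · intro i j hij _ u hu hnb
    obtain ⟨hua, hub, huv, hup, huq⟩ : u ≠ a ∧ u ≠ b ∧ u ≠ v ∧ u ≠ p ∧ u ≠ q :=
      ⟨fun h => hnb ⟨0, h.symm⟩, fun h => hnb ⟨1, h.symm⟩, fun h => hnb ⟨2, h.symm⟩,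
        fun h => hnb ⟨3, h.symm⟩, fun h => hnb ⟨4, h.symm⟩⟩
    have huP : u ∈ R₁.support ∨ u ∈ R₂.support ∨ u ∈ R₃.support →
        u ∉ P₁.support ∧ u ∉ P₂.support :=
      fun hR => ⟨fun h => huv (hPR u (Or.inl h) hR), fun h => huv (hPR u (Or.inr h) hR)⟩
    fin_cases i <;> fin_cases j <;> try exact absurd hij (by decide)
    · replace hu : u ∈ Q.support := hu
      obtain rfl : u = r := by simpa [Q, hua, hub] using hu
      simp [tag, hrP, hrR]
    · replace hu : u ∈ P₁.support := hu
      simp [tag, hu]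
    · replace hu : u ∈ hap.toWalk.support := hu
      simp [hua, hup] at hu
    · replace hu : u ∈ haq.toWalk.support := hu
      simp [hua, huq] at hu
    · replace hu : u ∈ P₂.support := by rw [← List.mem_reverse, ← support_reverse]; exact hu
      have huP₁ : u ∉ P₁.support := fun h => huv (hP₁₂ u h hu)
      simp [tag, hu, huP₁]
    · replace hu : u ∈ hbp.toWalk.support := hu
      simp [hub, hup] at hu
    · replace hu : u ∈ hbq.toWalk.support := hu
      simp [hub, huq] at hu
    · replace hu : u ∈ R₁.support := hu
      simp [tag, hu, huP (Or.inl hu)]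
    · replace hu : u ∈ R₃.support := by rw [← List.mem_reverse, ← support_reverse]; exact hu
      have huR₁ : u ∉ R₁.support := fun h => huv (hR₁₃ u h hu)
      have huR₂ : u ∉ R₂.support := fun h => huq (hR₂₃.eq_of_mem_support_append h hu)
      simp [tag, hu, huP (Or.inr (Or.inr hu)), huR₁, huR₂]
    · replace hu : u ∈ R₂.support := hu
      have huR₁ : u ∉ R₁.support := fun h => hup (hR₁₂.eq_of_mem_support_append h hu)
      simp [tag, hu, huP (Or.inr (Or.inl hu)), huR₁]

theorem statement_14_general {V : Type} (G : SimpleGraph V)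
    (x₁ x₂ x₃ x₄ x₅ : V)
    (hdist : [x₁, x₂, x₃, x₄, x₅].Pairwise (· ≠ ·))
    (e₁₃ : G.Adj x₁ x₃) (e₁₄ : G.Adj x₁ x₄) (e₁₅ : G.Adj x₁ x₅)
    (e₂₃ : G.Adj x₂ x₃) (e₂₄ : G.Adj x₂ x₄) (e₂₅ : G.Adj x₂ x₅)
    (P : G.Walk x₁ x₂) (hP : P.IsPath)
    (h₃P : x₃ ∉ P.support) (h₄P : x₄ ∉ P.support) (h₅P : x₅ ∉ P.support)
    (v : V) (hv : v ∈ P.support) (hv₁ : v ≠ x₁) (hv₂ : v ≠ x₂)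
    (hcirc : ∃ (a : V) (C : G.Walk a a), C.IsCycle ∧ v ∈ C.support ∧
      (∀ u ∈ C.support, u ∉ P.support ∨ u = v) ∧
      (({x₃, x₄, x₅} : Set V) ∩ {u | u ∈ C.support}).ncard = 2) :
    ContainsTK5 G := by
  classical
  obtain ⟨a, C, hC, hvC, hCP, hcard⟩ := hcirc
  have hT : ∀ z ∈ ({x₃, x₄, x₅} : Set V), G.Adj x₁ z ∧ G.Adj x₂ z ∧ z ∉ P.support := by
    rintro z (rfl | rfl | rfl)
    exacts [⟨e₁₃, e₂₃, h₃P⟩, ⟨e₁₄, e₂₄, h₄P⟩, ⟨e₁₅, e₂₅, h₅P⟩]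
  obtain ⟨⟨h₃₄, h₃₅⟩, h₄₅⟩ : (x₃ ≠ x₄ ∧ x₃ ≠ x₅) ∧ x₄ ≠ x₅ := by
    simpa using (hdist.sublist (.cons _ (.cons _ (.refl _))) : [x₃, x₄, x₅].Pairwise (· ≠ ·))
  have hTcard : ({x₃, x₄, x₅} : Set V).ncard = 3 :=
    Set.ncard_eq_three.mpr ⟨_, _, _, h₃₄, h₃₅, h₄₅, rfl⟩
  obtain ⟨p, q, r, hpq, ⟨hpT, hpC⟩, ⟨hqT, hqC⟩, ⟨hrT, hrC⟩⟩ :=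
    Set.exists_ne_mem_inter_and_mem_diff_of_ncard_inter_eq_two (Set.toFinite _) (by omega) hcard
  obtain ⟨R₁, R₂, R₃, hR, hRC⟩ := (hC.rotate hvC).exists_append_append
    (by simpa using hpC) (by simpa using hqC)
  simp only [Walk.mem_support_rotate_iff] at hRC
  obtain ⟨hap, hbp, hpP⟩ := hT p hpT
  obtain ⟨haq, hbq, hqP⟩ := hT q hqT
  obtain ⟨har, hbr, hrP⟩ := hT r hrT
  rw [← P.take_spec hv] at hP hpP hqP hrP hCP
  exact containsTK5_of_poles_path_cycle hap haq har hbp hbq hbr hv₁ hv₂ hpq hP hR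
    (fun x hxP hxR => (hCP x (hRC x hxR)).resolve_left (not_not.mpr hxP)) hpP hqP hrP
    fun h => hrC (hRC r h)

theorem statement_14 {V : Type} [Fintype V] (G : SimpleGraph V)
    (x₁ x₂ x₃ x₄ x₅ : V)
    (hdist : [x₁, x₂, x₃, x₄, x₅].Pairwise (· ≠ ·))
    (e₁₃ : G.Adj x₁ x₃) (e₁₄ : G.Adj x₁ x₄) (e₁₅ : G.Adj x₁ x₅)
    (e₂₃ : G.Adj x₂ x₃) (e₂₄ : G.Adj x₂ x₄) (e₂₅ : G.Adj x₂ x₅)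
    (P : G.Walk x₁ x₂) (hP : P.IsPath)
    (h₃P : x₃ ∉ P.support) (h₄P : x₄ ∉ P.support) (h₅P : x₅ ∉ P.support)
    (v : V) (hv : v ∈ P.support) (hv₁ : v ≠ x₁) (hv₂ : v ≠ x₂)
    (hcirc : ∃ (a : V) (C : G.Walk a a), C.IsCycle ∧ v ∈ C.support ∧
      (∀ u ∈ C.support, u ∉ P.support ∨ u = v) ∧
      (({x₃, x₄, x₅} : Set V) ∩ {u | u ∈ C.support}).ncard = 2) :
    ContainsTK5 G :=
  statement_14_general G x₁ x₂ x₃ x₄ x₅ hdist e₁₃ e₁₄ e₁₅ e₂₃ e₂₄ e₂₅ P hP h₃P h₄P h₅P v hv hv₁ hv₂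
    hcirc
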